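/- arXiv:2502.15234 — 2 statements merged into one kernel-verified Lean document; each statement's English description precedes it below -/
import Mathlib

section
/- Let τ ≥ 0 and C ≥ 0 be real numbers and let (a_n), (b_n), (c_n), (d_n) be sequences of nonnegative real numbers. Fix m ∈ ℕ and suppose that for every natural number k with 0 ≤ k ≤ m one has a_k + τ·Σ_{n=0}^{k} b_n ≤ τ·Σ_{n=0}^{k} d_n·a_n + τ·Σ_{n=0}^{k} c_n + C. Suppose moreover that τ·d_n < 1 for every 0 ≤ n ≤ m, and set σ_n = (1 − τ·d_n)^{-1}. Then a_m + τ·Σ_{n=0}^{m} b_n ≤ exp(τ·Σ_{n=0}^{m} σ_n·d_n) · (τ·Σ_{n=0}^{m} c_n + C). -/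
/-!
Write `u k = a k + τ ∑_{n ≤ k} b n` and `K = τ ∑_{n ≤ m} c n + C`. Since `a ≤ u` and the partial
sums of `c` increase, the hypothesis gives the implicit inequality `u k ≤ ∑_{n ≤ k} τ d n u n + K`.
Its right-hand side `R k` satisfies `R k ≤ R (k - 1) + τ d k R k`, i.e. `R k ≤ σ k R (k - 1)`, so
`u m ≤ (∏ σ n) K`; finally `σ n = 1 + τ σ n d n ≤ exp (τ σ n d n)`.
-/

open Finset

namespace HeywoodRannacher

theorem le_prod_mul_of_le_mul {R : Type*} [CommSemiring R] [PartialOrder R] [IsOrderedRing R]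
    {x g : ℕ → R} {m : ℕ} (hg : ∀ k < m, 0 ≤ g k) (hx : ∀ k < m, x (k + 1) ≤ g k * x k) :
    x m ≤ (∏ k ∈ range m, g k) * x 0 := by
  induction m with
  | zero => simp
  | succ m ih =>
    calc x (m + 1) ≤ g m * x m := hx m m.lt_succ_self
      _ ≤ g m * ((∏ k ∈ range m, g k) * x 0) :=
        mul_le_mul_of_nonneg_left
          (ih (fun k hk => hg k (by omega)) (fun k hk => hx k (by omega))) (hg m m.lt_succ_self)
      _ = (∏ k ∈ range (m + 1), g k) * x 0 := by rw [prod_range_succ]; ring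

theorem le_prod_inv_one_sub_mul_of_le_sum_mul {R : Type*} [Field R] [LinearOrder R]
    [IsStrictOrderedRing R] {u w : ℕ → R} {K : R} {m : ℕ}
    (hw₀ : ∀ n ≤ m, 0 ≤ w n) (hw₁ : ∀ n ≤ m, w n < 1)
    (hu : ∀ k ≤ m, u k ≤ ∑ n ∈ range (k + 1), w n * u n + K) :
    u m ≤ (∏ n ∈ range (m + 1), (1 - w n)⁻¹) * K := by
  set S : ℕ → R := fun k => ∑ n ∈ range k, w n * u n + K with hS
  have step : ∀ k < m + 1, S (k + 1) ≤ (1 - w k)⁻¹ * S k := by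
    intro k hk
    have hpos : 0 < 1 - w k := sub_pos.mpr (hw₁ k (by omega))
    have hSucc : S (k + 1) = S k + w k * u k := by simp only [hS, sum_range_succ]; ring
    have : w k * u k ≤ w k * S (k + 1) := mul_le_mul_of_nonneg_left (hu k (by omega)) (hw₀ k (by omega))
    rw [le_inv_mul_iff₀ hpos]
    linarith
  calc u m ≤ S (m + 1) := hu m le_rfl
    _ ≤ (∏ n ∈ range (m + 1), (1 - w n)⁻¹) * S 0 :=
      le_prod_mul_of_le_mul (fun k hk => inv_nonneg.mpr (sub_nonneg.mpr (hw₁ k (by omega)).le)) step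
    _ = (∏ n ∈ range (m + 1), (1 - w n)⁻¹) * K := by simp [hS]

theorem inv_one_sub_le_exp {x : ℝ} (hx : x < 1) : (1 - x)⁻¹ ≤ Real.exp ((1 - x)⁻¹ * x) := by
  have hpos : 0 < 1 - x := sub_pos.mpr hx
  calc (1 - x)⁻¹ = (1 - x)⁻¹ * x + 1 := by field_simp; ring
    _ ≤ Real.exp ((1 - x)⁻¹ * x) := Real.add_one_le_exp _

theorem prod_inv_one_sub_le_exp_sum {ι : Type*} {s : Finset ι} {x : ι → ℝ} (hx : ∀ i ∈ s, x i < 1) :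
    ∏ i ∈ s, (1 - x i)⁻¹ ≤ Real.exp (∑ i ∈ s, (1 - x i)⁻¹ * x i) := by
  rw [Real.exp_sum]
  exact prod_le_prod (fun i hi => inv_nonneg.mpr (sub_nonneg.mpr (hx i hi).le))
    (fun i hi => inv_one_sub_le_exp (hx i hi))

theorem discrete_gronwall_general
    (τ C : ℝ) (hτ : 0 ≤ τ) (hC : 0 ≤ C)
    (a b c d : ℕ → ℝ)
    (hb : ∀ n, 0 ≤ b n) (hc : ∀ n, 0 ≤ c n) (hd : ∀ n, 0 ≤ d n)
    (m : ℕ)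
    (hrec : ∀ k ≤ m,
      a k + τ * ∑ n ∈ range (k + 1), b n ≤
        τ * ∑ n ∈ range (k + 1), d n * a n + τ * ∑ n ∈ range (k + 1), c n + C)
    (hsmall : ∀ n ≤ m, τ * d n < 1) :
    a m + τ * ∑ n ∈ range (m + 1), b n ≤
      Real.exp (τ * ∑ n ∈ range (m + 1), (1 - τ * d n)⁻¹ * d n) *
        (τ * ∑ n ∈ range (m + 1), c n + C) := by
  set u : ℕ → ℝ := fun k => a k + τ * ∑ n ∈ range (k + 1), b n
  set K := τ * ∑ n ∈ range (m + 1), c n + C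
  have ha_le : ∀ n, a n ≤ u n := fun n =>
    le_add_of_nonneg_right (mul_nonneg hτ (sum_nonneg fun i _ => hb i))
  have hu : ∀ k ≤ m, u k ≤ ∑ n ∈ range (k + 1), τ * d n * u n + K := by
    intro k hk
    have hda : τ * ∑ n ∈ range (k + 1), d n * a n ≤ ∑ n ∈ range (k + 1), τ * d n * u n := by
      rw [mul_sum]
      refine sum_le_sum fun n _ => ?_
      rw [← mul_assoc]
      exact mul_le_mul_of_nonneg_left (ha_le n) (mul_nonneg hτ (hd n))
    have hcK : τ * ∑ n ∈ range (k + 1), c n ≤ τ * ∑ n ∈ range (m + 1), c n := by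
      refine mul_le_mul_of_nonneg_left ?_ hτ
      exact sum_le_sum_of_subset_of_nonneg (range_subset_range.mpr (by omega)) fun n _ _ => hc n
    linarith [hrec k hk]
  have hK : 0 ≤ K := add_nonneg (mul_nonneg hτ (sum_nonneg fun n _ => hc n)) hC
  have hexp : τ * ∑ n ∈ range (m + 1), (1 - τ * d n)⁻¹ * d n
      = ∑ n ∈ range (m + 1), (1 - τ * d n)⁻¹ * (τ * d n) := by
    rw [mul_sum]; exact sum_congr rfl fun n _ => by ring
  calc u m ≤ (∏ n ∈ range (m + 1), (1 - τ * d n)⁻¹) * K :=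
        le_prod_inv_one_sub_mul_of_le_sum_mul (fun n _ => mul_nonneg hτ (hd n)) hsmall hu
    _ ≤ _ := by
      rw [hexp]
      exact mul_le_mul_of_nonneg_right
        (prod_inv_one_sub_le_exp_sum fun n hn => hsmall n (by simp at hn; omega)) hK

/-- Discrete Grönwall inequality (Heywood–Rannacher form). -/
theorem discrete_gronwall
    (τ C : ℝ) (hτ : 0 ≤ τ) (hC : 0 ≤ C)
    (a b c d : ℕ → ℝ)
    (ha : ∀ n, 0 ≤ a n) (hb : ∀ n, 0 ≤ b n) (hc : ∀ n, 0 ≤ c n) (hd : ∀ n, 0 ≤ d n)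
    (m : ℕ)
    (hrec : ∀ k ≤ m,
      a k + τ * ∑ n ∈ range (k + 1), b n ≤
        τ * ∑ n ∈ range (k + 1), d n * a n + τ * ∑ n ∈ range (k + 1), c n + C)
    (hsmall : ∀ n ≤ m, τ * d n < 1) :
    a m + τ * ∑ n ∈ range (m + 1), b n ≤
      Real.exp (τ * ∑ n ∈ range (m + 1), (1 - τ * d n)⁻¹ * d n) *
        (τ * ∑ n ∈ range (m + 1), c n + C) :=
  discrete_gronwall_general τ C hτ hC a b c d hb hc hd m hrec hsmall

end HeywoodRannacher
end

section
/- Let H be a real Hilbert space, let C > 0, and let u : ℝ → H be twice differentiable. Define ρ : ℝ → ℝ by ρ(t) = √(½‖u(t)‖² + C). Then ρ is twice differentiable and for every t ∈ ℝ, |ρ″(t)|² ≤ (‖u″(t)‖²·‖u(t)‖² + ‖u′(t)‖⁴)/C + (‖u′(t)‖⁴·‖u(t)‖⁴)/(8·C³). -/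
/-!
With `e = ½‖u‖² + C ≥ C` one has `e' = ⟪u, u'⟫` and `e'' = ‖u'‖² + ⟪u, u''⟫`, and
`(√e)'' = e'' / (2√e) - e'² / (4√e³)`. The inequality `(x - y)² ≤ 2x² + 2y²` turns this into
`|(√e)''|² ≤ e''² / (2e) + e'⁴ / (8e³)`, after which `e ≥ C` and Cauchy–Schwarz finish.
-/

open Real RealInnerProductSpace

theorem HasDerivAt.sqrt_deriv {e e' : ℝ → ℝ} {t e'' : ℝ} (hde : HasDerivAt e (e' t) t) (he : 0 < e t)
    (hde' : HasDerivAt e' e'' t) :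
    HasDerivAt (fun t => e' t / (2 * √(e t)))
      (e'' / (2 * √(e t)) - e' t ^ 2 / (4 * √(e t) ^ 3)) t := by
  have hs : 0 < √(e t) := sqrt_pos.mpr he
  refine (hde'.div ((hde.sqrt he.ne').const_mul 2) (by positivity)).congr_deriv ?_
  field_simp
  ring

theorem sq_sqrt_second_deriv_le {a b s : ℝ} (hs : 0 < s) :
    (a / (2 * √s) - b ^ 2 / (4 * √s ^ 3)) ^ 2 ≤ a ^ 2 / (2 * s) + b ^ 4 / (8 * s ^ 3) := by
  have hsq : √s ^ 2 = s := sq_sqrt hs.le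
  calc (a / (2 * √s) - b ^ 2 / (4 * √s ^ 3)) ^ 2
      ≤ 2 * ((a / (2 * √s)) ^ 2 + (-(b ^ 2 / (4 * √s ^ 3))) ^ 2) := by
        rw [sub_eq_add_neg]; exact add_sq_le
    _ = a ^ 2 / (2 * √s ^ 2) + b ^ 4 / (8 * (√s ^ 2) ^ 3) := by ring
    _ = a ^ 2 / (2 * s) + b ^ 4 / (8 * s ^ 3) := by rw [hsq]

section InnerProductSpace

variable {H : Type*} [NormedAddCommGroup H] [InnerProductSpace ℝ H]

theorem sq_norm_sq_add_inner_le (x y z : H) :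
    (‖x‖ ^ 2 + ⟪y, z⟫) ^ 2 ≤ 2 * (‖z‖ ^ 2 * ‖y‖ ^ 2 + ‖x‖ ^ 4) := by
  have hcs : ⟪y, z⟫ ^ 2 ≤ (‖z‖ * ‖y‖) ^ 2 := by
    rw [← sq_abs, mul_comm]
    exact pow_le_pow_left₀ (abs_nonneg _) (abs_real_inner_le_norm y z) 2
  calc (‖x‖ ^ 2 + ⟪y, z⟫) ^ 2 ≤ 2 * ((‖x‖ ^ 2) ^ 2 + ⟪y, z⟫ ^ 2) := add_sq_le
    _ ≤ 2 * (‖z‖ ^ 2 * ‖y‖ ^ 2 + ‖x‖ ^ 4) := by nlinarith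

theorem inner_pow_four_le (x y : H) : ⟪x, y⟫ ^ 4 ≤ ‖y‖ ^ 4 * ‖x‖ ^ 4 := by
  rw [← mul_pow, mul_comm, ← (by decide : Even 4).pow_abs]
  exact pow_le_pow_left₀ (abs_nonneg _) (abs_real_inner_le_norm x y) 4

end InnerProductSpace

theorem sav_rho_second_derivative_bound_general
    {H : Type*} [NormedAddCommGroup H] [InnerProductSpace ℝ H]
    (C : ℝ) (hC : 0 < C) (u u' u'' : ℝ → H)
    (hu : ∀ t, HasDerivAt u (u' t) t)
    (hu' : ∀ t, HasDerivAt u' (u'' t) t)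
    (ρ : ℝ → ℝ) (hρ : ∀ t, ρ t = Real.sqrt (1 / 2 * ‖u t‖ ^ 2 + C)) :
    ∃ ρ' ρ'' : ℝ → ℝ, (∀ t, HasDerivAt ρ (ρ' t) t) ∧ (∀ t, HasDerivAt ρ' (ρ'' t) t) ∧
      ∀ t, |ρ'' t| ^ 2 ≤
        (‖u'' t‖ ^ 2 * ‖u t‖ ^ 2 + ‖u' t‖ ^ 4) / C +
          ‖u' t‖ ^ 4 * ‖u t‖ ^ 4 / (8 * C ^ 3) := by
  set e : ℝ → ℝ := fun t => 1 / 2 * ‖u t‖ ^ 2 + C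
  have he_ge (t : ℝ) : C ≤ e t := by simp only [e]; nlinarith [sq_nonneg ‖u t‖]
  have he_pos (t : ℝ) : 0 < e t := hC.trans_le (he_ge t)
  have hde (t : ℝ) : HasDerivAt e ⟪u t, u' t⟫ t :=
    (((hu t).norm_sq.const_mul (1 / 2)).add_const C).congr_deriv (by ring)
  have hde' (t : ℝ) : HasDerivAt (fun t => ⟪u t, u' t⟫) (‖u' t‖ ^ 2 + ⟪u t, u'' t⟫) t :=
    ((hu t).inner ℝ (hu' t)).congr_deriv (by rw [real_inner_self_eq_norm_sq]; ring)
  obtain rfl : ρ = fun t => √(e t) := funext hρ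
  refine ⟨_, _, fun t => (hde t).sqrt (he_pos t).ne',
    fun t => (hde t).sqrt_deriv (he_pos t) (hde' t), fun t => ?_⟩
  rw [sq_abs]
  refine (sq_sqrt_second_deriv_le (he_pos t)).trans (add_le_add ?_ ?_)
  · calc (‖u' t‖ ^ 2 + ⟪u t, u'' t⟫) ^ 2 / (2 * e t)
        ≤ 2 * (‖u'' t‖ ^ 2 * ‖u t‖ ^ 2 + ‖u' t‖ ^ 4) / (2 * C) := by
          gcongr
          exacts [sq_norm_sq_add_inner_le _ _ _, he_ge t]
      _ = _ := mul_div_mul_left _ _ two_ne_zero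
  · gcongr
    exacts [inner_pow_four_le _ _, he_ge t]

/-- Quantitative second-derivative bound for the SAV auxiliary variable
`ρ(t) = √(½‖u(t)‖² + C)`. -/
theorem sav_rho_second_derivative_bound
    {H : Type*} [NormedAddCommGroup H] [InnerProductSpace ℝ H] [CompleteSpace H]
    (C : ℝ) (hC : 0 < C) (u u' u'' : ℝ → H)
    (hu : ∀ t, HasDerivAt u (u' t) t)
    (hu' : ∀ t, HasDerivAt u' (u'' t) t)
    (ρ : ℝ → ℝ) (hρ : ∀ t, ρ t = Real.sqrt (1 / 2 * ‖u t‖ ^ 2 + C)) :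
    ∃ ρ' ρ'' : ℝ → ℝ, (∀ t, HasDerivAt ρ (ρ' t) t) ∧ (∀ t, HasDerivAt ρ' (ρ'' t) t) ∧
      ∀ t, |ρ'' t| ^ 2 ≤
        (‖u'' t‖ ^ 2 * ‖u t‖ ^ 2 + ‖u' t‖ ^ 4) / C +
          ‖u' t‖ ^ 4 * ‖u t‖ ^ 4 / (8 * C ^ 3) :=
  sav_rho_second_derivative_bound_general C hC u u' u'' hu hu' ρ hρ
end
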